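/- arXiv:1610.07283 — 2 statements merged into one kernel-verified Lean document; each statement's English description precedes it below -/
import Mathlib

section
/- Cancellation of the pressure coupling terms: for smooth functions v: Ω → ℝ², q, T: Ω → ℝ on Ω = M × (0,1) satisfying ∇·∫₀¹ v dζ = 0 on M and v·n = 0 on the lateral boundary, the identity ∫_Ω (∫₀^z (bP/p(ζ)) ∇[(1+aq)T](x,y,ζ) dζ)·v dxdydz = ∫_Ω (bP/p)(1+aq)(∫₀^z ∇·v(x,y,ζ) dζ) T dxdydz holds, where p(z) = (P−p₀)z + p₀ with 0 < p₀ ≤ P. -/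
open MeasureTheory Set

/-- Horizontal divergence `∂_x v₁ + ∂_y v₂` at horizontal point `xy`, height `z`. -/
noncomputable def hdivAt (v : (ℝ × ℝ) × ℝ → ℝ × ℝ) (xy : ℝ × ℝ) (z : ℝ) : ℝ :=
  fderiv ℝ (fun y : ℝ × ℝ => (v (y, z)).1) xy (1, 0) +
    fderiv ℝ (fun y : ℝ × ℝ => (v (y, z)).2) xy (0, 1)

/-- Horizontal gradient of a scalar field at fixed height, as a vector in `ℝ²`. -/
noncomputable def hgradAt (f : (ℝ × ℝ) × ℝ → ℝ) (xy : ℝ × ℝ) (z : ℝ) : ℝ × ℝ :=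
  (fderiv ℝ (fun y : ℝ × ℝ => f (y, z)) xy (1, 0),
    fderiv ℝ (fun y : ℝ × ℝ => f (y, z)) xy (0, 1))

/-- Euclidean dot product on `ℝ²`. -/
def dot2 (u w : ℝ × ℝ) : ℝ := u.1 * w.1 + u.2 * w.2

lemma fderiv_slice {E : Type*} [NormedAddCommGroup E] [NormedSpace ℝ E]
    (f : (ℝ × ℝ) × ℝ → E) (hf : ContDiff ℝ (⊤ : ℕ∞) f) (xy : ℝ × ℝ) (z : ℝ) (e : ℝ × ℝ) :
    fderiv ℝ (fun y : ℝ × ℝ => f (y, z)) xy e = fderiv ℝ f (xy, z) (e, 0) := by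
  have h1 : HasFDerivAt (fun y : ℝ × ℝ => (y, z))
      ((ContinuousLinearMap.id ℝ (ℝ × ℝ)).prod 0) xy :=
    (hasFDerivAt_id xy).prodMk (hasFDerivAt_const z xy)
  have h2 := (hf.differentiable (by simp) (xy, z)).hasFDerivAt
  have h3 := h2.comp xy h1
  have h4 : (fun y : ℝ × ℝ => f (y, z)) = f ∘ (fun y => (y, z)) := rfl
  rw [h4, h3.fderiv]
  rfl

lemma contDiff_slice {E : Type*} [NormedAddCommGroup E] [NormedSpace ℝ E]
    {f : (ℝ × ℝ) × ℝ → E} (hf : ContDiff ℝ (⊤ : ℕ∞) f) (z : ℝ) :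
    ContDiff ℝ (⊤ : ℕ∞) (fun y : ℝ × ℝ => f (y, z)) :=
  hf.comp (contDiff_id.prodMk contDiff_const)

lemma hdivAt_eq_full {v : (ℝ × ℝ) × ℝ → ℝ × ℝ} (hv : ContDiff ℝ (⊤ : ℕ∞) v) (xy : ℝ × ℝ) (z : ℝ) :
    hdivAt v xy z = (fderiv ℝ v (xy, z) ((1, 0), 0)).1 + (fderiv ℝ v (xy, z) ((0, 1), 0)).2 := by
  have h1 : ∀ e : ℝ × ℝ, fderiv ℝ (fun y : ℝ × ℝ => (v (y, z)).1) xy e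
      = (fderiv ℝ v (xy, z) (e, 0)).1 := by
    intro e
    rw [fderiv_slice (fun p => (v p).1) (contDiff_fst.comp hv) xy z e]
    have h5 := ((ContinuousLinearMap.fst ℝ ℝ ℝ).hasFDerivAt.comp (xy, z)
      (hv.differentiable (by simp) (xy, z)).hasFDerivAt).fderiv
    have h6 : (fun p : (ℝ × ℝ) × ℝ => (v p).1)
        = (ContinuousLinearMap.fst ℝ ℝ ℝ) ∘ v := rfl
    rw [h6, h5]; rfl
  have h2 : ∀ e : ℝ × ℝ, fderiv ℝ (fun y : ℝ × ℝ => (v (y, z)).2) xy e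
      = (fderiv ℝ v (xy, z) (e, 0)).2 := by
    intro e
    rw [fderiv_slice (fun p => (v p).2) (contDiff_snd.comp hv) xy z e]
    have h5 := ((ContinuousLinearMap.snd ℝ ℝ ℝ).hasFDerivAt.comp (xy, z)
      (hv.differentiable (by simp) (xy, z)).hasFDerivAt).fderiv
    have h6 : (fun p : (ℝ × ℝ) × ℝ => (v p).2)
        = (ContinuousLinearMap.snd ℝ ℝ ℝ) ∘ v := rfl
    rw [h6, h5]; rfl
  rw [hdivAt, h1, h2]

lemma hgradAt_eq_full {f : (ℝ × ℝ) × ℝ → ℝ} (hf : ContDiff ℝ (⊤ : ℕ∞) f) (xy : ℝ × ℝ) (z : ℝ) :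
    hgradAt f xy z = (fderiv ℝ f (xy, z) ((1, 0), 0), fderiv ℝ f (xy, z) ((0, 1), 0)) := by
  rw [hgradAt, fderiv_slice f hf xy z, fderiv_slice f hf xy z]

lemma continuous_fderiv_apply {E F : Type*} [NormedAddCommGroup E] [NormedSpace ℝ E]
    [NormedAddCommGroup F] [NormedSpace ℝ F]
    {f : E → F} (hf : ContDiff ℝ (⊤ : ℕ∞) f) (u : E) :
    Continuous (fun p => fderiv ℝ f p u) :=
  (ContinuousLinearMap.apply ℝ F u).continuous.comp (hf.continuous_fderiv (by simp))

lemma continuous_hdivAt {v : (ℝ × ℝ) × ℝ → ℝ × ℝ} (hv : ContDiff ℝ (⊤ : ℕ∞) v) :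
    Continuous (fun p : (ℝ × ℝ) × ℝ => hdivAt v p.1 p.2) := by
  have : (fun p : (ℝ × ℝ) × ℝ => hdivAt v p.1 p.2)
      = fun p => (fderiv ℝ v p ((1, 0), 0)).1 + (fderiv ℝ v p ((0, 1), 0)).2 := by
    funext p; exact hdivAt_eq_full hv p.1 p.2
  rw [this]
  exact ((continuous_fst.comp (continuous_fderiv_apply hv _))).add
    ((continuous_snd.comp (continuous_fderiv_apply hv _)))

lemma continuous_hgradAt {f : (ℝ × ℝ) × ℝ → ℝ} (hf : ContDiff ℝ (⊤ : ℕ∞) f) :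
    Continuous (fun p : (ℝ × ℝ) × ℝ => hgradAt f p.1 p.2) := by
  have : (fun p : (ℝ × ℝ) × ℝ => hgradAt f p.1 p.2)
      = fun p => (fderiv ℝ f p ((1, 0), 0), fderiv ℝ f p ((0, 1), 0)) := by
    funext p; exact hgradAt_eq_full hf p.1 p.2
  rw [this]
  exact (continuous_fderiv_apply hf _).prodMk (continuous_fderiv_apply hf _)

lemma intOn1 {E : Type*} [NormedAddCommGroup E] {f : ℝ → E} (hf : Continuous f)
    {s : Set ℝ} (hs : Bornology.IsBounded s) : IntegrableOn f s volume :=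
  (hf.continuousOn.integrableOn_compact hs.isCompact_closure).mono_set subset_closure

lemma intOn2 {E : Type*} [NormedAddCommGroup E] {f : ℝ × ℝ → E} (hf : Continuous f)
    {s : Set (ℝ × ℝ)} (hs : Bornology.IsBounded s) : IntegrableOn f s volume :=
  (hf.continuousOn.integrableOn_compact hs.isCompact_closure).mono_set subset_closure

lemma intOn3 {E : Type*} [NormedAddCommGroup E] {f : (ℝ × ℝ) × ℝ → E} (hf : Continuous f)
    {s : Set ((ℝ × ℝ) × ℝ)} (hs : Bornology.IsBounded s) : IntegrableOn f s volume :=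
  (hf.continuousOn.integrableOn_compact hs.isCompact_closure).mono_set subset_closure

/-- The pressure coefficient with clamped height, so that it is continuous on all of `ℝ`. -/
noncomputable def clampC (b P p₀ : ℝ) : ℝ → ℝ :=
  fun ζ => b * P / ((P - p₀) * (max 0 (min ζ 1)) + p₀)

lemma clampC_eq {b P p₀ : ℝ} (hp₀ : 0 < p₀) (hP : p₀ ≤ P) {ζ : ℝ} (hζ : ζ ∈ Icc (0:ℝ) 1) :
    b * P / ((P - p₀) * ζ + p₀) = clampC b P p₀ ζ := by
  have h1 : max 0 (min ζ 1) = ζ := by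
    rw [min_eq_left hζ.2, max_eq_right hζ.1]
  rw [clampC, h1]

lemma clampC_cont {b P p₀ : ℝ} (hp₀ : 0 < p₀) (hP : p₀ ≤ P) :
    Continuous (clampC b P p₀) := by
  apply continuous_const.div
  · fun_prop
  · intro ζ
    have h0 : 0 ≤ max 0 (min ζ 1) := le_max_left _ _
    have h1 : 0 ≤ (P - p₀) * (max 0 (min ζ 1)) :=
      mul_nonneg (by linarith) h0
    positivity

/-- `dot2 · u` as a continuous linear map. -/
noncomputable def dot2CLM (u : ℝ × ℝ) : (ℝ × ℝ) →L[ℝ] ℝ :=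
  u.1 • ContinuousLinearMap.fst ℝ ℝ ℝ + u.2 • ContinuousLinearMap.snd ℝ ℝ ℝ

lemma dot2CLM_apply (u w : ℝ × ℝ) : dot2CLM u w = dot2 w u := by
  simp [dot2CLM, dot2]; ring

lemma continuous_dot2 {X : Type*} [TopologicalSpace X] {A B : X → ℝ × ℝ}
    (hA : Continuous A) (hB : Continuous B) :
    Continuous fun x => dot2 (A x) (B x) := by
  unfold dot2; fun_prop


/-- Cancellation of the pressure coupling terms: with `p(z) = (P−p₀)z + p₀`, for `v`
satisfying the barotropic constraint `∫₀¹ ∇·v dζ = 0` and tangent to the lateral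
boundary (encoded weakly via the divergence theorem),
`∫_Ω (∫₀^z (bP/p(ζ)) ∇[(1+aq)T] dζ)·v = ∫_Ω (bP/p)(1+aq)(∫₀^z ∇·v dζ) T`. -/
theorem pressure_coupling_cancellation (M : Set (ℝ × ℝ)) (hM : IsOpen M)
    (hMb : Bornology.IsBounded M) (a b P p₀ : ℝ)
    (ha : 0 < a) (hb : 0 < b) (hp₀ : 0 < p₀) (hP : p₀ ≤ P)
    (v : (ℝ × ℝ) × ℝ → ℝ × ℝ) (q T : (ℝ × ℝ) × ℝ → ℝ)
    (hv : ContDiff ℝ (⊤ : ℕ∞) v) (hq : ContDiff ℝ (⊤ : ℕ∞) q) (hT : ContDiff ℝ (⊤ : ℕ∞) T)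
    (hbaro : ∀ xy ∈ M, (∫ ζ in (0 : ℝ)..1, hdivAt v xy ζ) = 0)
    (hlat : ∀ z : ℝ, ∀ φ : ℝ × ℝ → ℝ, ContDiff ℝ 1 φ →
      (∫ xy in M, (fderiv ℝ (fun y : ℝ × ℝ => φ y * (v (y, z)).1) xy (1, 0) +
        fderiv ℝ (fun y : ℝ × ℝ => φ y * (v (y, z)).2) xy (0, 1))) = 0) :
    (∫ p in M ×ˢ Ioo (0 : ℝ) 1,
        dot2 (∫ ζ in (0 : ℝ)..p.2,
          (b * P / ((P - p₀) * ζ + p₀)) •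
            hgradAt (fun p' => (1 + a * q p') * T p') p.1 ζ) (v p)) =
      ∫ p in M ×ˢ Ioo (0 : ℝ) 1,
        (b * P / ((P - p₀) * p.2 + p₀)) * (1 + a * q p) *
          (∫ ζ in (0 : ℝ)..p.2, hdivAt v p.1 ζ) * T p := by
  -- notation
  set f : (ℝ × ℝ) × ℝ → ℝ := fun p => (1 + a * q p) * T p with hf_def
  have hf : ContDiff ℝ (⊤ : ℕ∞) f := (contDiff_const.add (contDiff_const.mul hq)).mul hT
  set c : ℝ → ℝ := clampC b P p₀ with hc_def
  have hc : Continuous c := clampC_cont hp₀ hP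
  set F : (ℝ × ℝ) → ℝ → ℝ × ℝ := fun xy ζ => c ζ • hgradAt f xy ζ with hF_def
  set W : (ℝ × ℝ) → ℝ → ℝ × ℝ := fun xy z => ∫ ζ in (0:ℝ)..z, F xy ζ with hW_def
  set g : (ℝ × ℝ) → ℝ → ℝ := fun xy ζ => c ζ * f (xy, ζ) with hg_def
  set G : (ℝ × ℝ) → ℝ → ℝ := fun xy z => ∫ ζ in (0:ℝ)..z, g xy ζ with hG_def
  set D : (ℝ × ℝ) → ℝ → ℝ := fun xy z => ∫ ζ in (0:ℝ)..z, hdivAt v xy ζ with hD_def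
  -- continuity facts
  have hvc : Continuous v := hv.continuous
  have hfc : Continuous f := hf.continuous
  have hdvc : Continuous (fun p : (ℝ × ℝ) × ℝ => hdivAt v p.1 p.2) := continuous_hdivAt hv
  have hgradc : Continuous (fun p : (ℝ × ℝ) × ℝ => hgradAt f p.1 p.2) := continuous_hgradAt hf
  have hFc : Continuous (fun p : (ℝ × ℝ) × ℝ => F p.1 p.2) :=
    (hc.comp continuous_snd).smul hgradc
  have hgc : Continuous (fun p : (ℝ × ℝ) × ℝ => g p.1 p.2) :=
    (hc.comp continuous_snd).mul (hfc.comp continuous_id)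
  have hWc : Continuous (fun p : (ℝ × ℝ) × ℝ => W p.1 p.2) := by
    exact intervalIntegral.continuous_parametric_intervalIntegral_of_continuous
      (f := fun (p : (ℝ × ℝ) × ℝ) t => F p.1 t)
      (hFc.comp (continuous_fst.prodMk continuous_snd |>.comp
        ((continuous_fst.comp continuous_fst).prodMk continuous_snd))) continuous_snd
  have hGc : Continuous (fun p : (ℝ × ℝ) × ℝ => G p.1 p.2) := by
    exact intervalIntegral.continuous_parametric_intervalIntegral_of_continuous
      (f := fun (p : (ℝ × ℝ) × ℝ) t => g p.1 t)
      (hgc.comp (((continuous_fst.comp continuous_fst).prodMk continuous_snd)))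
      continuous_snd
  have hDc : Continuous (fun p : (ℝ × ℝ) × ℝ => D p.1 p.2) := by
    exact intervalIntegral.continuous_parametric_intervalIntegral_of_continuous
      (f := fun (p : (ℝ × ℝ) × ℝ) t => hdivAt v p.1 t)
      (hdvc.comp (((continuous_fst.comp continuous_fst).prodMk continuous_snd)))
      continuous_snd
  have hIooB : Bornology.IsBounded (Ioo (0:ℝ) 1) := Metric.isBounded_Ioo 0 1
  have hprodB : Bornology.IsBounded (M ×ˢ Ioo (0:ℝ) 1) := hMb.prod hIooB
  have hMmeas : MeasurableSet M := hM.measurableSet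
  have hprodmeas : MeasurableSet (M ×ˢ Ioo (0:ℝ) 1) := hMmeas.prod measurableSet_Ioo
  -- Key identity: horizontal integration by parts through `hlat`
  have key : ∀ z ζ : ℝ,
      (∫ xy in M, dot2 (F xy ζ) (v (xy, z))) = - ∫ xy in M, g xy ζ * hdivAt v xy z := by
    intro z ζ
    set φ : ℝ × ℝ → ℝ := fun xy => c ζ * f (xy, ζ) with hφ_def
    have hφ : ContDiff ℝ 1 φ := (contDiff_const.mul (contDiff_slice hf ζ)).of_le (by simp)
    have h0 := hlat z φ hφ
    have hpt : ∀ xy : ℝ × ℝ,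
        fderiv ℝ (fun y : ℝ × ℝ => φ y * (v (y, z)).1) xy (1, 0) +
          fderiv ℝ (fun y : ℝ × ℝ => φ y * (v (y, z)).2) xy (0, 1)
        = dot2 (F xy ζ) (v (xy, z)) + g xy ζ * hdivAt v xy z := by
      intro xy
      have dφ : DifferentiableAt ℝ φ xy := (hφ.differentiable one_ne_zero).differentiableAt
      have dslice : DifferentiableAt ℝ (fun y : ℝ × ℝ => f (y, ζ)) xy :=
        ((contDiff_slice hf ζ).differentiable (by simp)).differentiableAt
      have dv1 : DifferentiableAt ℝ (fun y : ℝ × ℝ => (v (y, z)).1) xy :=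
        ((contDiff_slice (contDiff_fst.comp hv) z).differentiable (by simp)).differentiableAt
      have dv2 : DifferentiableAt ℝ (fun y : ℝ × ℝ => (v (y, z)).2) xy :=
        ((contDiff_slice (contDiff_snd.comp hv) z).differentiable (by simp)).differentiableAt
      have e1 := fderiv_fun_mul (𝕜 := ℝ) dφ dv1
      have e2 := fderiv_fun_mul (𝕜 := ℝ) dφ dv2
      have eφ : fderiv ℝ φ xy = c ζ • fderiv ℝ (fun y : ℝ × ℝ => f (y, ζ)) xy :=
        fderiv_const_mul dslice (c ζ)
      rw [e1, e2, eφ]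
      simp only [ContinuousLinearMap.add_apply, ContinuousLinearMap.smul_apply,
        smul_eq_mul, dot2, hdivAt, hF_def, hg_def, hgradAt, hφ_def, Prod.smul_fst,
        Prod.smul_snd]
      ring
    rw [funext hpt] at h0
    have iA : IntegrableOn (fun xy => dot2 (F xy ζ) (v (xy, z))) M volume := by
      apply intOn2 _ hMb
      exact continuous_dot2 (hFc.comp (continuous_id.prodMk continuous_const))
        (hvc.comp (continuous_id.prodMk continuous_const))
    have iB : IntegrableOn (fun xy => g xy ζ * hdivAt v xy z) M volume := by
      apply intOn2 _ hMb
      exact (hgc.comp (continuous_id.prodMk continuous_const)).mul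
        (hdvc.comp (continuous_id.prodMk continuous_const))
    rw [integral_add iA iB] at h0
    linarith
  -- per fixed height z: reduce to `-∫ G · div v`
  have step3 : ∀ z ∈ Ioo (0:ℝ) 1,
      (∫ xy in M, dot2 (W xy z) (v (xy, z))) = ∫ xy in M, -(G xy z * hdivAt v xy z) := by
    intro z hz
    have hz0 : (0:ℝ) ≤ z := hz.1.le
    have hIocB : Bornology.IsBounded (Ioc (0:ℝ) z) := Metric.isBounded_Ioc 0 z
    have ha' : ∀ xy : ℝ × ℝ, dot2 (W xy z) (v (xy, z))
        = ∫ ζ in Ioc (0:ℝ) z, dot2 (F xy ζ) (v (xy, z)) := by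
      intro xy
      have hFi : IntegrableOn (fun ζ => F xy ζ) (Ioc (0:ℝ) z) volume :=
        intOn1 (hFc.comp (continuous_const.prodMk continuous_id)) hIocB
      have hcomm := (dot2CLM (v (xy, z))).integral_comp_comm hFi
      have h1 : W xy z = ∫ ζ in Ioc (0:ℝ) z, F xy ζ :=
        intervalIntegral.integral_of_le hz0
      rw [h1, ← dot2CLM_apply, ← hcomm]
      simp only [dot2CLM_apply]
    rw [funext ha']
    have hswap : Integrable
        (Function.uncurry fun xy ζ => dot2 (F xy ζ) (v (xy, z)))
        ((volume.restrict M).prod (volume.restrict (Ioc (0:ℝ) z))) := by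
      rw [Measure.prod_restrict, ← Measure.volume_eq_prod]
      exact intOn3 (continuous_dot2 hFc
        (hvc.comp (continuous_fst.prodMk continuous_const))) (hMb.prod hIocB)
    rw [integral_integral_swap hswap]
    rw [funext (fun ζ => key z ζ), integral_neg]
    have hswap2 : Integrable
        (Function.uncurry fun xy ζ => g xy ζ * hdivAt v xy z)
        ((volume.restrict M).prod (volume.restrict (Ioc (0:ℝ) z))) := by
      rw [Measure.prod_restrict, ← Measure.volume_eq_prod]
      have hcont : Continuous fun p : (ℝ × ℝ) × ℝ => g p.1 p.2 * hdivAt v p.1 z :=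
        hgc.mul (hdvc.comp (continuous_fst.prodMk continuous_const))
      exact intOn3 hcont (hMb.prod hIocB)
    rw [← integral_integral_swap hswap2]
    rw [← integral_neg]
    apply setIntegral_congr_fun hMmeas
    intro xy _
    dsimp only
    have h2 : (∫ ζ in Ioc (0:ℝ) z, g xy ζ * hdivAt v xy z)
        = (∫ ζ in Ioc (0:ℝ) z, g xy ζ) * hdivAt v xy z := integral_mul_const _ _
    have h3 : G xy z = ∫ ζ in Ioc (0:ℝ) z, g xy ζ := intervalIntegral.integral_of_le hz0
    rw [h2, ← h3]
  -- per-column integration by parts in the vertical variable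
  have step5 : ∀ xy ∈ M,
      (∫ z in Ioo (0:ℝ) 1, -(G xy z * hdivAt v xy z)) = ∫ z in Ioo (0:ℝ) 1, g xy z * D xy z := by
    intro xy hxy
    have hgxc : Continuous (g xy) := hgc.comp (continuous_const.prodMk continuous_id)
    have hdxc : Continuous (fun ζ => hdivAt v xy ζ) :=
      hdvc.comp (continuous_const.prodMk continuous_id)
    have hu : ∀ x ∈ uIcc (0:ℝ) 1, HasDerivAt (G xy) (g xy x) x := fun x _ =>
      (hgxc.integral_hasStrictDerivAt 0 x).hasDerivAt
    have hw : ∀ x ∈ uIcc (0:ℝ) 1, HasDerivAt (D xy) (hdivAt v xy x) x := fun x _ =>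
      (hdxc.integral_hasStrictDerivAt 0 x).hasDerivAt
    have hu' : IntervalIntegrable (g xy) volume 0 1 := hgxc.intervalIntegrable 0 1
    have hw' : IntervalIntegrable (fun ζ => hdivAt v xy ζ) volume 0 1 :=
      hdxc.intervalIntegrable 0 1
    have hibp := intervalIntegral.integral_mul_deriv_eq_deriv_mul hu hw hu' hw'
    have hD1 : D xy 1 = 0 := hbaro xy hxy
    have hG0 : G xy 0 = 0 := intervalIntegral.integral_same
    rw [hD1, hG0] at hibp
    have e0 : (∫ z in (0:ℝ)..1, G xy z * hdivAt v xy z)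
        = ∫ z in Ioo (0:ℝ) 1, G xy z * hdivAt v xy z := by
      rw [intervalIntegral.integral_of_le zero_le_one, integral_Ioc_eq_integral_Ioo]
    have e2 : (∫ z in (0:ℝ)..1, g xy z * D xy z)
        = ∫ z in Ioo (0:ℝ) 1, g xy z * D xy z := by
      rw [intervalIntegral.integral_of_le zero_le_one, integral_Ioc_eq_integral_Ioo]
    rw [integral_neg, ← e0, hibp, e2]
    ring
  -- assemble the left-hand side
  have hL0 : (∫ p in M ×ˢ Ioo (0 : ℝ) 1,
        dot2 (∫ ζ in (0 : ℝ)..p.2, (b * P / ((P - p₀) * ζ + p₀)) • hgradAt f p.1 ζ) (v p))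
      = ∫ p in M ×ˢ Ioo (0:ℝ) 1, dot2 (W p.1 p.2) (v p) := by
    apply setIntegral_congr_fun hprodmeas
    rintro ⟨xy, z⟩ hp
    obtain ⟨hxyM, hzI⟩ := hp
    dsimp only
    congr 1
    apply intervalIntegral.integral_congr
    intro ζ hζ
    rw [uIcc_of_le hzI.1.le] at hζ
    have hζ' : ζ ∈ Icc (0:ℝ) 1 := ⟨hζ.1, hζ.2.trans hzI.2.le⟩
    simp only [hF_def, hc_def]
    rw [← clampC_eq hp₀ hP hζ']
  have hintW : IntegrableOn (fun p : (ℝ × ℝ) × ℝ => dot2 (W p.1 p.2) (v p))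
      (M ×ˢ Ioo (0:ℝ) 1) volume :=
    intOn3 (continuous_dot2 hWc hvc) hprodB
  have hL1 : (∫ p in M ×ˢ Ioo (0:ℝ) 1, dot2 (W p.1 p.2) (v p))
      = ∫ xy in M, ∫ z in Ioo (0:ℝ) 1, dot2 (W xy z) (v (xy, z)) := by
    rw [Measure.volume_eq_prod] at hintW ⊢
    exact setIntegral_prod _ hintW
  have hswapL : Integrable
      (Function.uncurry fun xy z => dot2 (W xy z) (v (xy, z)))
      ((volume.restrict M).prod (volume.restrict (Ioo (0:ℝ) 1))) := by
    rw [Measure.prod_restrict, ← Measure.volume_eq_prod]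
    have hcont : Continuous fun p : (ℝ × ℝ) × ℝ => dot2 (W p.1 p.2) (v (p.1, p.2)) :=
      continuous_dot2 hWc (hvc.comp (continuous_fst.prodMk continuous_snd))
    exact intOn3 hcont hprodB
  have hL2 : (∫ xy in M, ∫ z in Ioo (0:ℝ) 1, dot2 (W xy z) (v (xy, z)))
      = ∫ z in Ioo (0:ℝ) 1, ∫ xy in M, dot2 (W xy z) (v (xy, z)) :=
    integral_integral_swap hswapL
  have hL3 : (∫ z in Ioo (0:ℝ) 1, ∫ xy in M, dot2 (W xy z) (v (xy, z)))
      = ∫ z in Ioo (0:ℝ) 1, ∫ xy in M, -(G xy z * hdivAt v xy z) := by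
    apply setIntegral_congr_fun measurableSet_Ioo
    intro z hz
    exact step3 z hz
  have hswapR : Integrable
      (Function.uncurry fun xy z => -(G xy z * hdivAt v xy z))
      ((volume.restrict M).prod (volume.restrict (Ioo (0:ℝ) 1))) := by
    rw [Measure.prod_restrict, ← Measure.volume_eq_prod]
    have hcont : Continuous fun p : (ℝ × ℝ) × ℝ => -(G p.1 p.2 * hdivAt v p.1 p.2) :=
      (hGc.mul hdvc).neg
    exact intOn3 hcont hprodB
  have hL4 : (∫ z in Ioo (0:ℝ) 1, ∫ xy in M, -(G xy z * hdivAt v xy z))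
      = ∫ xy in M, ∫ z in Ioo (0:ℝ) 1, -(G xy z * hdivAt v xy z) :=
    (integral_integral_swap hswapR).symm
  have hL5 : (∫ xy in M, ∫ z in Ioo (0:ℝ) 1, -(G xy z * hdivAt v xy z))
      = ∫ xy in M, ∫ z in Ioo (0:ℝ) 1, g xy z * D xy z := by
    apply setIntegral_congr_fun hMmeas
    intro xy hxy
    exact step5 xy hxy
  -- assemble the right-hand side
  have hR0 : (∫ p in M ×ˢ Ioo (0 : ℝ) 1,
        (b * P / ((P - p₀) * p.2 + p₀)) * (1 + a * q p) *
          (∫ ζ in (0 : ℝ)..p.2, hdivAt v p.1 ζ) * T p)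
      = ∫ p in M ×ˢ Ioo (0:ℝ) 1, g p.1 p.2 * D p.1 p.2 := by
    apply setIntegral_congr_fun hprodmeas
    rintro ⟨xy, z⟩ hp
    obtain ⟨hxyM, hzI⟩ := hp
    have hz' : z ∈ Icc (0:ℝ) 1 := ⟨hzI.1.le, hzI.2.le⟩
    simp only [hg_def, hD_def, hc_def, hf_def]
    rw [← clampC_eq hp₀ hP hz']
    ring
  have hintR : IntegrableOn (fun p : (ℝ × ℝ) × ℝ => g p.1 p.2 * D p.1 p.2)
      (M ×ˢ Ioo (0:ℝ) 1) volume :=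
    intOn3 (hgc.mul hDc) hprodB
  have hR1 : (∫ p in M ×ˢ Ioo (0:ℝ) 1, g p.1 p.2 * D p.1 p.2)
      = ∫ xy in M, ∫ z in Ioo (0:ℝ) 1, g xy z * D xy z := by
    rw [Measure.volume_eq_prod] at hintR ⊢
    exact setIntegral_prod _ hintR
  rw [hL0, hL1, hL2, hL3, hL4, hL5, hR0, hR1]
end

section
/- Covering-number cardinality bound: with N = N(θ) ≥ 2, the sets E_k defined by E₁ = V₁, E_k = S E_{k−1} ∪ V_k with card(V_k) ≤ N^k satisfy card(E_k) ≤ N + N² + ⋯ + N^k, and consequently N_ε(∪_k E_k, V) ≤ (2 + N) N^n whenever θ^n K R ≤ ε < θ^{n−1} K R, which yields dim_F(∪_k E_k, V) ≤ −ln N / ln θ. -/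
/-!
Every point of `E_k` with `k < n` is its own `ε`-centre, while the tail `⋃_{k ≥ n} E_k` is covered
by the `N^n` balls around `V_n`. Since `card E_k ≤ N + ⋯ + N^k < N^{k+1}`, the head contributes fewer
than `N^{n+1}` centres, so `N_ε ≤ (N + 1) N^n` at the scale `ε ∈ [θ^n K R, θ^{n-1} K R)`. Taking
logarithms, `ln N_ε ≤ c + (-ln N / ln θ) ln (1/ε)` for small `ε`, which bounds the `limsup`.
-/

open Set Filter Metric

/-- The minimal number of `ε`-balls needed to cover `A`, as a real number. -/
noncomputable def coverN {X : Type*} [MetricSpace X] (A : Set X) (ε : ℝ) : ℝ :=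
  sInf {r : ℝ | ∃ s : Finset X, (s.card : ℝ) = r ∧ A ⊆ ⋃ x ∈ s, Metric.ball x ε}

/-- The fractal (box-counting) dimension:
`dim_F(A) = limsup_{ε→0⁺} log N_ε(A) / log(1/ε)`. -/
noncomputable def fractalDim {X : Type*} [MetricSpace X] (A : Set X) : ℝ :=
  limsup (fun ε : ℝ => Real.log (coverN A ε) / Real.log (1 / ε)) (nhdsWithin 0 (Ioi 0))

open Topology Real

lemma Finset.card_le_sum_of_eq_image_union {β : Type*} [DecidableEq β] (S : β → β)
    {Vk Ek : ℕ → Finset β} {c : ℕ → ℕ} (hcard : ∀ k ≥ 1, (Vk k).card ≤ c k)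
    (hE1 : Ek 1 = Vk 1) (hEk : ∀ k ≥ 2, Ek k = (Ek (k - 1)).image S ∪ Vk k) :
    ∀ k ≥ 1, (Ek k).card ≤ ∑ i ∈ Finset.Icc 1 k, c i := by
  intro k hk
  induction k, hk using Nat.le_induction with
  | base => simpa [hE1] using hcard 1 le_rfl
  | succ k hk ih =>
    calc (Ek (k + 1)).card ≤ ((Ek k).image S).card + (Vk (k + 1)).card := by
          rw [hEk (k + 1) (by omega), Nat.add_sub_cancel]
          exact Finset.card_union_le _ _
      _ ≤ (∑ i ∈ Finset.Icc 1 k, c i) + c (k + 1) :=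
          add_le_add (Finset.card_image_le.trans ih) (hcard _ (by omega))
      _ = ∑ i ∈ Finset.Icc 1 (k + 1), c i := (Finset.sum_Icc_succ_top (by omega) _).symm

lemma exists_pow_mul_le_lt_pred_pow_mul {θ a ε : ℝ} (hθ : θ < 1) (hε : 0 < ε) (hεa : ε < a) :
    ∃ n ≥ 1, θ ^ n * a ≤ ε ∧ ε < θ ^ (n - 1) * a := by
  classical
  have ha : 0 < a := hε.trans hεa
  have hex : ∃ n : ℕ, θ ^ n * a ≤ ε := by
    obtain ⟨n, hn⟩ := exists_pow_lt_of_lt_one (div_pos hε ha) hθ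
    exact ⟨n, ((lt_div_iff₀ ha).1 hn).le⟩
  have hn0 : Nat.find hex ≠ 0 := fun h0 => by
    have h := Nat.find_spec hex
    rw [h0, pow_zero, one_mul] at h
    linarith
  exact ⟨Nat.find hex, Nat.one_le_iff_ne_zero.2 hn0, Nat.find_spec hex,
    lt_of_not_ge (Nat.find_min hex (by omega))⟩

lemma log_mul_pow_le_of_lt_pow_mul {θ a C N ε : ℝ} {n : ℕ} (hθ : θ ∈ Ioo 0 1) (hC : 0 < C)
    (hN : 1 ≤ N) (hε : 0 < ε) (hn : 1 ≤ n) (hεn : ε < θ ^ (n - 1) * a) :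
    log (C * N ^ n) ≤ log C + log N + (-log N / log θ) * (log a + log (1 / ε)) := by
  have hlogθ : log θ < 0 := log_neg hθ.1 hθ.2
  have ha : 0 < a := pos_of_mul_pos_right (hε.trans hεn) (by positivity [hθ.1])
  have hscale : ((n : ℝ) - 1) * -log θ < log a + log (1 / ε) := by
    have h := log_lt_log hε hεn
    rw [log_mul (pow_ne_zero _ hθ.1.ne') ha.ne', log_pow, Nat.cast_sub hn, Nat.cast_one] at h
    rw [one_div, log_inv]
    linarith
  have hn' : ((n : ℝ) - 1) * log N ≤ (-log N / log θ) * (log a + log (1 / ε)) := by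
    rw [neg_div, ← div_neg, div_mul_eq_mul_div, mul_comm, le_div_iff₀ (neg_pos.2 hlogθ), mul_assoc]
    exact mul_le_mul_of_nonneg_left hscale.le (log_nonneg hN)
  calc log (C * N ^ n) = log C + log N + ((n : ℝ) - 1) * log N := by
        rw [log_mul hC.ne' (by positivity [hN]), log_pow]; ring
    _ ≤ _ := by linarith

lemma tendsto_affine_div_atTop (b c : ℝ) :
    Tendsto (fun u : ℝ => (c + b * u) / u) atTop (𝓝 b) := by
  have h : Tendsto (fun u : ℝ => c / u + b) atTop (𝓝 (0 + b)) :=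
    (tendsto_const_nhds.div_atTop tendsto_id).add_const b
  rw [zero_add] at h
  refine h.congr' ?_
  filter_upwards [eventually_ne_atTop 0] with u hu
  rw [add_div, mul_div_cancel_right₀ _ hu]

section coverN

variable {X : Type*} [MetricSpace X]

lemma coverN_nonneg (A : Set X) (ε : ℝ) : 0 ≤ coverN A ε :=
  Real.sInf_nonneg fun _ ⟨_, hs, _⟩ => hs ▸ Nat.cast_nonneg _

lemma coverN_le_card {A : Set X} {ε : ℝ} (s : Finset X) (hs : A ⊆ ⋃ x ∈ s, ball x ε) :
    coverN A ε ≤ s.card :=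
  csInf_le ⟨0, fun _ ⟨_, ht, _⟩ => ht ▸ Nat.cast_nonneg _⟩ ⟨s, rfl, hs⟩

-- `coverN` is `0` both for the empty set and when no finite cover exists (`sInf ∅ = 0`).
lemma coverN_eq_zero_or_one_le (A : Set X) (ε : ℝ) : coverN A ε = 0 ∨ 1 ≤ coverN A ε := by
  rcases {r : ℝ | ∃ s : Finset X, (s.card : ℝ) = r ∧ A ⊆ ⋃ x ∈ s, ball x ε}.eq_empty_or_nonempty
    with hempty | hne
  · left
    rw [coverN, hempty, Real.sInf_empty]
  by_cases h0 : A ⊆ ⋃ x ∈ (∅ : Finset X), ball x ε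
  · left
    exact le_antisymm (by simpa using coverN_le_card ∅ h0) (coverN_nonneg A ε)
  · right
    refine le_csInf hne ?_
    rintro _ ⟨s, rfl, hs⟩
    rcases s.eq_empty_or_nonempty with rfl | hs'
    · exact absurd hs h0
    · exact Nat.one_le_cast.2 hs'.card_pos

lemma log_coverN_nonneg (A : Set X) (ε : ℝ) : 0 ≤ log (coverN A ε) := by
  rcases coverN_eq_zero_or_one_le A ε with h | h
  · simp [h]
  · exact log_nonneg h

lemma log_coverN_le {A : Set X} {ε M : ℝ} (h : coverN A ε ≤ M) (hM : 1 ≤ M) :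
    log (coverN A ε) ≤ log M := by
  rcases coverN_eq_zero_or_one_le A ε with h0 | h1
  · simpa [h0] using log_nonneg hM
  · exact log_le_log (by linarith) h

lemma coverN_biUnion_le [DecidableEq X] {E : ℕ → Finset X} {C : Finset X} {n : ℕ} {r ε : ℝ}
    (hε : 0 < ε) (hrε : r ≤ ε)
    (htail : ⋃ k ∈ {j : ℕ | n ≤ j}, (E k : Set X) ⊆ ⋃ c ∈ C, ball c r) :
    coverN (⋃ k ∈ {j : ℕ | 1 ≤ j}, (E k : Set X)) ε ≤
      ((∑ k ∈ Finset.Ico 1 n, (E k).card + C.card : ℕ) : ℝ) := by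
  refine (coverN_le_card ((Finset.Ico 1 n).biUnion E ∪ C) ?_).trans ?_
  · simp only [iUnion_subset_iff]
    intro k hk x hx
    rcases lt_or_ge k n with hkn | hnk
    · exact mem_biUnion (Finset.mem_union_left _ (Finset.mem_biUnion.2
        ⟨k, Finset.mem_Ico.2 ⟨hk, hkn⟩, hx⟩)) (mem_ball_self hε)
    · obtain ⟨c, hc, hxc⟩ := mem_iUnion₂.1 (htail (mem_biUnion hnk hx))
      exact mem_biUnion (Finset.mem_union_right _ hc) (ball_subset_ball hrε hxc)
  · exact_mod_cast (Finset.card_union_le _ _).trans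
      (Nat.add_le_add_right Finset.card_biUnion_le _)

lemma fractalDim_le_of_log_coverN_le {A : Set X} {b c : ℝ}
    (h : ∀ᶠ ε in 𝓝[>] 0, log (coverN A ε) ≤ c + b * log (1 / ε)) : fractalDim A ≤ b := by
  have hlog : Tendsto (fun ε : ℝ => log (1 / ε)) (𝓝[>] 0) atTop := by
    simpa only [one_div, Function.comp_def] using tendsto_log_atTop.comp tendsto_inv_nhdsGT_zero
  have hg := (tendsto_affine_div_atTop b c).comp hlog
  have hpos : ∀ᶠ ε in 𝓝[>] (0 : ℝ), 0 < log (1 / ε) := hlog.eventually_gt_atTop 0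
  refine (limsup_le_limsup ?_ ?_ hg.isBoundedUnder_le).trans_eq hg.limsup_eq
  · filter_upwards [h, hpos] with ε hε hu using div_le_div_of_nonneg_right hε hu.le
  · exact isCoboundedUnder_le_of_eventually_le _
      (hpos.mono fun ε hu => div_nonneg (log_coverN_nonneg A ε) hu.le)

lemma fractalDim_le_of_coverN_le_mul_pow {A : Set X} {θ a C N : ℝ} (hθ : θ ∈ Ioo 0 1)
    (ha : 0 < a) (hC : 1 ≤ C) (hN : 1 ≤ N)
    (h : ∀ n ≥ 1, ∀ ε : ℝ, θ ^ n * a ≤ ε → ε < θ ^ (n - 1) * a → coverN A ε ≤ C * N ^ n) :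
    fractalDim A ≤ -log N / log θ := by
  refine fractalDim_le_of_log_coverN_le (c := log C + log N + (-log N / log θ) * log a) ?_
  filter_upwards [Ioo_mem_nhdsGT ha] with ε ⟨hε, hεa⟩
  obtain ⟨n, hn, hlo, hhi⟩ := exists_pow_mul_le_lt_pred_pow_mul hθ.2 hε hεa
  have hCN : 1 ≤ C * N ^ n := one_le_mul_of_one_le_of_one_le hC (one_le_pow₀ hN)
  have := (log_coverN_le (h n hn ε hlo hhi) hCN).trans
    (log_mul_pow_le_of_lt_pow_mul hθ (by linarith) hN hε hn hhi)
  linarith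

end coverN

/-- Covering-number cardinality bound in the exponential-attractor construction:
with `N ≥ 2`, `E₁ = V₁`, `E_k = S E_{k−1} ∪ V_k`, `card(V_k) ≤ N^k`, one has
`card(E_k) ≤ N + N² + ⋯ + N^k`; consequently
`N_ε(∪_k E_k, V) ≤ (2 + N) N^n` whenever `θ^n K R ≤ ε < θ^{n−1} K R`,
which yields `dim_F(∪_k E_k, V) ≤ −ln N / ln θ`. -/
theorem covering_cardinality_bound {V : Type*} [NormedAddCommGroup V] [DecidableEq V]
    (S : V → V) (θ K R : ℝ) (hθ : θ ∈ Ioo (0 : ℝ) 1) (hK : 0 < K) (hR : 0 < R)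
    (N : ℕ) (hN : 2 ≤ N)
    (Vk Ek : ℕ → Finset V)
    (hcard : ∀ k ≥ 1, (Vk k).card ≤ N ^ k)
    (hE1 : Ek 1 = Vk 1)
    (hEk : ∀ k ≥ 2, Ek k = (Ek (k - 1)).image S ∪ Vk k)
    (hcover : ∀ n ≥ 1, (⋃ k ∈ {j : ℕ | n ≤ j}, (Ek k : Set V)) ⊆
      ⋃ h ∈ Vk n, Metric.ball h (θ ^ n * K * R)) :
    (∀ k ≥ 1, ((Ek k).card : ℝ) ≤ ∑ i ∈ Finset.Icc 1 k, (N : ℝ) ^ i) ∧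
    (∀ n ≥ 1, ∀ ε : ℝ, θ ^ n * K * R ≤ ε → ε < θ ^ (n - 1) * K * R →
      coverN (⋃ k ∈ {j : ℕ | 1 ≤ j}, (Ek k : Set V)) ε ≤ (2 + (N : ℝ)) * (N : ℝ) ^ n) ∧
    fractalDim (⋃ k ∈ {j : ℕ | 1 ≤ j}, (Ek k : Set V)) ≤
      -Real.log N / Real.log θ := by
  have hcardE := Finset.card_le_sum_of_eq_image_union S hcard hE1 hEk
  have hcardE_lt (k : ℕ) (hk : 1 ≤ k) : (Ek k).card < N ^ (k + 1) :=
    (hcardE k hk).trans_lt (Nat.geomSum_lt hN fun i hi => Nat.lt_succ_of_le (Finset.mem_Icc.1 hi).2)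
  have hcoverN (n : ℕ) (hn : 1 ≤ n) (ε : ℝ) (hlo : θ ^ n * K * R ≤ ε) :
      coverN (⋃ k ∈ {j : ℕ | 1 ≤ j}, (Ek k : Set V)) ε ≤ (2 + (N : ℝ)) * (N : ℝ) ^ n := by
    have hsum : ∑ k ∈ Finset.Ico 1 n, (Ek k).card + (Vk n).card ≤ (2 + N) * N ^ n :=
      calc _ ≤ ∑ k ∈ Finset.Ico 1 n, N ^ (k + 1) + N ^ n :=
            add_le_add (Finset.sum_le_sum fun k hk => (hcardE_lt k (Finset.mem_Ico.1 hk).1).le)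
              (hcard n hn)
        _ = N * ∑ k ∈ Finset.Ico 1 n, N ^ k + N ^ n := by simp only [Finset.mul_sum, pow_succ']
        _ ≤ N * N ^ n + N ^ n := by
            gcongr; exact (Nat.geomSum_lt hN fun k hk => (Finset.mem_Ico.1 hk).2).le
        _ = (N + 1) * N ^ n := by ring
        _ ≤ (2 + N) * N ^ n := Nat.mul_le_mul_right _ (by omega)
    have hε : 0 < ε := (by positivity [hθ.1] : 0 < θ ^ n * K * R).trans_le hlo
    exact (coverN_biUnion_le hε hlo (hcover n hn)).trans (by exact_mod_cast hsum)
  refine ⟨fun k hk => by exact_mod_cast hcardE k hk, fun n hn ε hlo _ => hcoverN n hn ε hlo, ?_⟩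
  refine fractalDim_le_of_coverN_le_mul_pow (C := 2 + (N : ℝ)) hθ (mul_pos hK hR)
    (by linarith [N.cast_nonneg (α := ℝ)]) (by exact_mod_cast (by omega : 1 ≤ N)) ?_
  intro n hn ε hlo _
  exact hcoverN n hn ε (by rwa [mul_assoc])
end
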